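/- arXiv:2002.11358 — 3 statements merged into one kernel-verified Lean document; each statement's English description precedes it below -/
import Mathlib

section
/- The map (𝒢, γ) ↦ (G, g) given by G = √(Λ² - 𝒢²) cos γ, g = -arctan((Λ/𝒢)√(1 - 𝒢²/Λ²) sin γ) (for 0 < 𝒢 < Λ) transforms E(G,g) := G² + m r √(1 - G²/Λ²) cos g into E = m r (𝒢/Λ) + (Λ² - 𝒢²) cos² γ. -/
theorem stmt_8 (Λ m r 𝒢 γ : ℝ) (hΛ : 0 < Λ) (hm : 0 < m) (hr : 0 < r)
    (h𝒢0 : 0 < 𝒢) (h𝒢Λ : 𝒢 < Λ)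
    (G g : ℝ)
    (hG : G = Real.sqrt (Λ^2 - 𝒢^2) * Real.cos γ)
    (hg : g = - Real.arctan ((Λ / 𝒢) * Real.sqrt (1 - 𝒢^2 / Λ^2) * Real.sin γ)) :
    G^2 + m * r * Real.sqrt (1 - G^2 / Λ^2) * Real.cos g
      = m * r * 𝒢 / Λ + (Λ^2 - 𝒢^2) * (Real.cos γ)^2 := by
  have h1 : (0:ℝ) ≤ 1 - 𝒢^2 / Λ^2 := by
    rw [sub_nonneg, div_le_one (by positivity)]
    nlinarith
  set t := (Λ / 𝒢) * Real.sqrt (1 - 𝒢^2 / Λ^2) * Real.sin γ with ht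
  have ht2 : t^2 = (Λ/𝒢)^2 * (1 - 𝒢^2/Λ^2) * Real.sin γ ^ 2 := by
    rw [ht, mul_pow, mul_pow, Real.sq_sqrt h1]
  have hG2 : G^2 = (Λ^2 - 𝒢^2) * Real.cos γ ^ 2 := by
    rw [hG, mul_pow, Real.sq_sqrt (by nlinarith : (0:ℝ) ≤ Λ^2 - 𝒢^2)]
  have hkey : 1 - G^2 / Λ^2 = (𝒢/Λ)^2 * (1 + t^2) := by
    rw [hG2, ht2]
    have hsc : Real.sin γ ^ 2 = 1 - Real.cos γ ^ 2 := by
      nlinarith [Real.sin_sq_add_cos_sq γ]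
    rw [hsc]
    field_simp
    ring
  have hcos : Real.cos g = 1 / Real.sqrt (1 + t^2) := by
    rw [hg, Real.cos_neg, Real.cos_arctan]
  have hsq : Real.sqrt (1 - G^2/Λ^2) = (𝒢/Λ) * Real.sqrt (1 + t^2) := by
    rw [hkey, Real.sqrt_mul (by positivity), Real.sqrt_sq (by positivity)]
  have hpos : Real.sqrt (1 + t^2) ≠ 0 := by positivity
  rw [hsq, hcos, hG2]
  field_simp
  ring
end

section
/- The map (𝒢, γ) ↦ (G, g) with G = √(Λ² - 𝒢²) cos γ and g = -arctan((Λ/𝒢)√(1 - 𝒢²/Λ²) sin γ), defined for 0 < 𝒢 < Λ, is canonical: dG ∧ dg = d𝒢 ∧ dγ (i.e., the Jacobian determinant ∂(G,g)/∂(𝒢,γ) equals 1). -/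
/-!
Since `Λ √(1 - 𝒢²/Λ²) = √(Λ² - 𝒢²) =: A`, the second component is `g = -arctan ((A / 𝒢) sin γ)`.
Differentiating, with `d(A/𝒢)/d𝒢 = -Λ² / (𝒢² A)`, the Jacobian becomes
`(𝒢² cos² γ + Λ² sin² γ) / (𝒢² + A² sin² γ)`, which is `1` because `A² + 𝒢² = Λ²`.
-/

open Real

lemma mul_sqrt_one_sub_sq_div_sq {Λ : ℝ} (hΛ : 0 < Λ) (s : ℝ) :
    Λ * √(1 - s ^ 2 / Λ ^ 2) = √(Λ ^ 2 - s ^ 2) := by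
  rw [one_sub_div (by positivity), sqrt_div' _ (by positivity), sqrt_sq hΛ.le]
  field_simp

lemma hasDerivAt_sqrt_sq_sub_sq {Λ s : ℝ} (h : Λ ^ 2 - s ^ 2 ≠ 0) :
    HasDerivAt (fun t => √(Λ ^ 2 - t ^ 2)) (-s / √(Λ ^ 2 - s ^ 2)) s := by
  convert ((hasDerivAt_pow 2 s).const_sub (Λ ^ 2)).sqrt h using 1
  ring

lemma hasDerivAt_sqrt_sq_sub_sq_div {Λ s : ℝ} (hs : s ≠ 0) (h : s ^ 2 < Λ ^ 2) :
    HasDerivAt (fun t => √(Λ ^ 2 - t ^ 2) / t) (-Λ ^ 2 / (s ^ 2 * √(Λ ^ 2 - s ^ 2))) s := by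
  have hpos : 0 < Λ ^ 2 - s ^ 2 := sub_pos.mpr h
  refine ((hasDerivAt_sqrt_sq_sub_sq hpos.ne').fun_div (hasDerivAt_id' s) hs).congr_deriv ?_
  have hA : √(Λ ^ 2 - s ^ 2) ≠ 0 := (sqrt_pos.mpr hpos).ne'
  field_simp
  rw [sq_sqrt hpos.le]
  ring

theorem stmt_9 (Λ : ℝ) (hΛ : 0 < Λ) (𝒢 γ : ℝ) (h𝒢0 : 0 < 𝒢) (h𝒢Λ : 𝒢 < Λ) :
    deriv (fun s : ℝ => Real.sqrt (Λ^2 - s^2) * Real.cos γ) 𝒢 *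
      deriv (fun c : ℝ => - Real.arctan ((Λ / 𝒢) * Real.sqrt (1 - 𝒢^2 / Λ^2) * Real.sin c)) γ
    - deriv (fun c : ℝ => Real.sqrt (Λ^2 - 𝒢^2) * Real.cos c) γ *
      deriv (fun s : ℝ => - Real.arctan ((Λ / s) * Real.sqrt (1 - s^2 / Λ^2) * Real.sin γ)) 𝒢
    = 1 := by
  have hk (s : ℝ) : Λ / s * √(1 - s ^ 2 / Λ ^ 2) = √(Λ ^ 2 - s ^ 2) / s := by
    rw [div_mul_eq_mul_div, mul_sqrt_one_sub_sq_div_sq hΛ]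
  simp only [hk]
  have hlt : 𝒢 ^ 2 < Λ ^ 2 := by gcongr
  have hpos : 0 < Λ ^ 2 - 𝒢 ^ 2 := sub_pos.mpr hlt
  rw [((hasDerivAt_sqrt_sq_sub_sq hpos.ne').mul_const (cos γ)).deriv,
    ((hasDerivAt_sin γ).const_mul (√(Λ ^ 2 - 𝒢 ^ 2) / 𝒢)).arctan.fun_neg.deriv,
    ((hasDerivAt_cos γ).const_mul √(Λ ^ 2 - 𝒢 ^ 2)).deriv,
    ((hasDerivAt_sqrt_sq_sub_sq_div h𝒢0.ne' hlt).mul_const (sin γ)).arctan.fun_neg.deriv]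
  set A := √(Λ ^ 2 - 𝒢 ^ 2)
  have hA : 0 < A := sqrt_pos.mpr hpos
  have hA_sq : A ^ 2 = Λ ^ 2 - 𝒢 ^ 2 := sq_sqrt hpos.le
  field_simp
  linear_combination -sin γ ^ 2 * hA_sq + 𝒢 ^ 2 * sin_sq_add_cos_sq γ
end

section
/- There exists c₀ > 0 such that for all ε₀ ∈ (0,1) and all real x with |x - π| ≤ π - 2√ε₀, the solution ξ'(x) of ξ' - sin ξ' = x satisfies 1 - cos ξ'(x) ≥ c₀ ε₀. -/
open Real

lemma aux_sin_ge_mul_cos {θ : ℝ} (h0 : 0 ≤ θ) (hπ : θ ≤ Real.pi) :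
    θ * Real.cos θ ≤ Real.sin θ := by
  rcases le_or_gt (Real.cos θ) 0 with hc | hc
  · have hs : 0 ≤ Real.sin θ := Real.sin_nonneg_of_nonneg_of_le_pi h0 hπ
    nlinarith
  · have hθ2 : θ < Real.pi / 2 := by
      by_contra h
      push_neg at h
      have := Real.cos_nonpos_of_pi_div_two_le_of_le h (by linarith [Real.pi_pos])
      linarith
    rcases eq_or_lt_of_le h0 with rfl | h0'
    · simp
    · have ht := Real.lt_tan h0' hθ2
      rw [Real.tan_eq_sin_div_cos] at ht
      have := (lt_div_iff₀ hc).mp ht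
      linarith

lemma aux_key {θ : ℝ} (h0 : 0 ≤ θ) (hπ : θ ≤ Real.pi) :
    θ - Real.sin θ ≤ Real.pi * (1 - Real.cos θ) := by
  have h1 : θ * Real.cos θ ≤ Real.sin θ := aux_sin_ge_mul_cos h0 hπ
  have h2 : 0 ≤ 1 - Real.cos θ := by linarith [Real.cos_le_one θ]
  nlinarith

lemma aux_mono : Monotone (fun t : ℝ => t - Real.sin t) := by
  have hd : ∀ t : ℝ, HasDerivAt (fun t : ℝ => t - Real.sin t) (1 - Real.cos t) t :=
    fun t => (hasDerivAt_id t).sub (Real.hasDerivAt_sin t)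
  exact monotone_of_deriv_nonneg
    (fun t => ((hd t).differentiableAt))
    (fun t => by rw [(hd t).deriv]; linarith [Real.cos_le_one t])

theorem stmt_16 :
    ∃ c₀ : ℝ, 0 < c₀ ∧ ∀ ε₀ : ℝ, 0 < ε₀ → ε₀ < 1 →
      ∀ x : ℝ, |x - Real.pi| ≤ Real.pi - 2 * Real.sqrt ε₀ →
        ∀ ξ : ℝ, ξ - Real.sin ξ = x → 1 - Real.cos ξ ≥ c₀ * ε₀ := by
  refine ⟨1/2, by norm_num, fun ε₀ hε0 hε1 x hx ξ hξ => ?_⟩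
  have hπ := Real.pi_pos
  have hπ4 := Real.pi_le_four
  set s := Real.sqrt ε₀ with hs
  have hs0 : 0 < s := Real.sqrt_pos.mpr hε0
  have hεs : ε₀ ≤ s := by
    have h1 : s ^ 2 = ε₀ := Real.sq_sqrt hε0.le
    have h2 : s ≤ 1 := Real.sqrt_le_one.mpr hε1.le
    nlinarith
  rw [abs_le] at hx
  have hx1 : 2 * s ≤ x := by linarith [hx.1]
  have hx2 : x ≤ 2 * Real.pi - 2 * s := by linarith [hx.2]
  -- ξ ∈ (0, 2π)
  have hξ0 : 0 < ξ := by
    by_contra h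
    push_neg at h
    have := aux_mono h
    simp at this
    linarith
  have hξ2π : ξ < 2 * Real.pi := by
    by_contra h
    push_neg at h
    have := aux_mono h
    simp [Real.sin_two_pi] at this
    linarith
  rcases le_or_gt ξ Real.pi with hcase | hcase
  · have := aux_key hξ0.le hcase
    have h3 : 2 * s ≤ Real.pi * (1 - Real.cos ξ) := by linarith
    have h4 : 2 * ε₀ ≤ Real.pi * (1 - Real.cos ξ) := by linarith
    have h5 : 0 ≤ 1 - Real.cos ξ := by linarith [Real.cos_le_one ξ]
    nlinarith
  · set φ := 2 * Real.pi - ξ with hφ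
    have hφ0 : 0 ≤ φ := by simp [hφ]; linarith
    have hφπ : φ ≤ Real.pi := by simp [hφ]; linarith
    have hsin : Real.sin φ = -Real.sin ξ := by
      rw [hφ, Real.sin_sub, Real.sin_two_pi, Real.cos_two_pi]; ring
    have hcos : Real.cos φ = Real.cos ξ := by
      rw [hφ, Real.cos_sub, Real.sin_two_pi, Real.cos_two_pi]; ring
    have := aux_key hφ0 hφπ
    rw [hsin, hcos] at this
    have h3 : 2 * s ≤ Real.pi * (1 - Real.cos ξ) := by
      have : (2 * Real.pi - ξ) + Real.sin ξ ≤ Real.pi * (1 - Real.cos ξ) := by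
        linarith [this]
      linarith
    have h5 : 0 ≤ 1 - Real.cos ξ := by linarith [Real.cos_le_one ξ]
    nlinarith
end
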